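/- Let n = p₁p₂⋯p_k be the product of the first k primes (k ≥ 2), and let X = C_{p_k} + Y where Y is any sum of cycles with |Y| = n − p_k and every element of L(Y) dividing n/p_k. Then X is an irreducible sum of cycles and C_n · X = n·C_n. -/
import Mathlib


/-- A sum of cycles has all cycle lengths positive. -/
def Pos (A : ℕ →₀ ℕ) : Prop := ∀ a ∈ A.support, 0 < a

/-- The single cycle of length `n`. -/
noncomputable def Cyc (n : ℕ) : ℕ →₀ ℕ := Finsupp.single n 1

/-- Product of sums of cycles: `C_a · C_x = gcd(a,x) C_{lcm(a,x)}`, extended by distributivity. -/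
noncomputable def cmul (A X : ℕ →₀ ℕ) : ℕ →₀ ℕ :=
  A.sum fun a m => X.sum fun x n => (m * n * Nat.gcd a x) • Finsupp.single (Nat.lcm a x) 1

/-- Number of vertices of a sum of cycles. -/
def size (A : ℕ →₀ ℕ) : ℕ := A.sum fun ℓ m => ℓ * m

/-- The support `L(A,B)` of an instance. -/
def instSupp (A B : ℕ →₀ ℕ) : Set ℕ :=
  {x | 0 < x ∧ x ≤ size B / size A ∧ ∀ a ∈ A.support, Nat.lcm a x ∈ B.support}

/-- Consistency: `L(A) ∨ L(A,B) = L(B)`. -/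
def Consistent (A B : ℕ →₀ ℕ) : Prop :=
  {ℓ | ∃ a ∈ A.support, ∃ x ∈ instSupp A B, Nat.lcm a x = ℓ} = ↑B.support

/-- Cycle length multiplication `A ⊗ p`. -/
noncomputable def otimes (A : ℕ →₀ ℕ) (p : ℕ) : ℕ →₀ ℕ :=
  A.mapDomain (fun a => p * a)

/-- Cycle length division `A ⊘ p`: `(A ⊘ p)(a) = A (p*a)`. -/
noncomputable def oslash (A : ℕ →₀ ℕ) (p : ℕ) : ℕ →₀ ℕ :=
  if hp : p = 0 then 0 else
    Finsupp.comapDomain (fun a => p * a) A ((mul_right_injective₀ hp).injOn)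

/-- Contraction `A ⊟ p`: each cycle of length `p*a` becomes `p` cycles of length `a`. -/
noncomputable def contract (A : ℕ →₀ ℕ) (p : ℕ) : ℕ →₀ ℕ :=
  A.filter (fun a => ¬ p ∣ a) + p • oslash A p


section Aux

lemma cmul_apply (A B : ℕ →₀ ℕ) (ℓ : ℕ) :
    cmul A B ℓ = ∑ a ∈ A.support, ∑ b ∈ B.support,
      if Nat.lcm a b = ℓ then A a * B b * Nat.gcd a b else 0 := by
  unfold cmul
  simp only [Finsupp.sum, Finsupp.finset_sum_apply, Finsupp.smul_apply, Finsupp.single_apply,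
    smul_eq_mul, mul_ite, mul_one, mul_zero]

lemma cmul_comm (A B : ℕ →₀ ℕ) : cmul A B = cmul B A := by
  ext ℓ
  rw [cmul_apply, cmul_apply, Finset.sum_comm]
  refine Finset.sum_congr rfl fun b _ => Finset.sum_congr rfl fun a _ => ?_
  rw [Nat.lcm_comm, Nat.gcd_comm]
  split <;> ring

lemma cmul_le (A B : ℕ →₀ ℕ) (a b : ℕ) (ha : a ∈ A.support) (hb : b ∈ B.support) :
    A a * B b * Nat.gcd a b ≤ cmul A B (Nat.lcm a b) := by
  rw [cmul_apply]
  calc A a * B b * Nat.gcd a b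
      = ∑ b' ∈ {b}, if Nat.lcm a b' = Nat.lcm a b then A a * B b' * Nat.gcd a b' else 0 := by simp
    _ ≤ ∑ b' ∈ B.support, if Nat.lcm a b' = Nat.lcm a b then A a * B b' * Nat.gcd a b' else 0 := by
        apply Finset.sum_le_sum_of_subset (Finset.singleton_subset_iff.mpr hb)
    _ ≤ _ := by
        apply Finset.single_le_sum (f := fun a' => ∑ b' ∈ B.support,
          if Nat.lcm a' b' = Nat.lcm a b then A a' * B b' * Nat.gcd a' b' else 0)
          (fun _ _ => Finset.sum_nonneg fun _ _ => by positivity) ha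

lemma cmul_exists (A B : ℕ →₀ ℕ) (ℓ : ℕ) (h : cmul A B ℓ ≠ 0) :
    ∃ a ∈ A.support, ∃ b ∈ B.support, Nat.lcm a b = ℓ ∧ A a * B b * Nat.gcd a b ≠ 0 := by
  rw [cmul_apply] at h
  obtain ⟨a, ha, h⟩ := Finset.exists_ne_zero_of_sum_ne_zero h
  obtain ⟨b, hb, h⟩ := Finset.exists_ne_zero_of_sum_ne_zero h
  refine ⟨a, ha, b, hb, ?_, ?_⟩ <;> by_contra hc <;> simp [hc] at h

end Aux

theorem irreducible_solution_primorial (k : ℕ) (hk : 2 ≤ k)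
    (n : ℕ) (hn : n = ∏ i ∈ Finset.range k, Nat.nth Nat.Prime i)
    (pk : ℕ) (hpk : pk = Nat.nth Nat.Prime (k - 1))
    (Y : ℕ →₀ ℕ) (hY : Pos Y) (hsize : size Y = n - pk)
    (hdvd : ∀ y ∈ Y.support, y ∣ n / pk)
    (X : ℕ →₀ ℕ) (hX : X = Cyc pk + Y) :
    (∀ A B : ℕ →₀ ℕ, Pos A → Pos B → cmul A B = X → A = Cyc 1 ∨ B = Cyc 1) ∧
      cmul (Cyc n) X = n • Cyc n := by
  -- basic number-theoretic setup
  set m : ℕ := ∏ i ∈ Finset.range (k-1), Nat.nth Nat.Prime i with hmdef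
  have hprime : Nat.Prime pk := hpk ▸ Nat.prime_nth_prime (k-1)
  have hnm : n = m * pk := by
    rw [hn, hpk, hmdef, ← Finset.prod_range_succ, Nat.sub_add_cancel (by omega : 1 ≤ k)]
  have hmpos : 0 < m := Finset.prod_pos fun i _ => (Nat.prime_nth_prime i).pos
  have hndiv : n / pk = m := by rw [hnm, Nat.mul_div_cancel _ hprime.pos]
  have hpkm : ¬ pk ∣ m := by
    intro h
    obtain ⟨i, hi, hdv⟩ := hprime.prime.exists_mem_finset_dvd h
    have heq : pk = Nat.nth Nat.Prime i :=
      (Nat.prime_dvd_prime_iff_eq hprime (Nat.prime_nth_prime i)).mp hdv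
    have : k - 1 = i := Nat.nth_injective Nat.infinite_setOf_prime (hpk ▸ heq)
    simp only [Finset.mem_range] at hi
    omega
  have hYpk : Y pk = 0 := by
    by_contra h
    have := hdvd pk (Finsupp.mem_support_iff.mpr h)
    rw [hndiv] at this
    exact hpkm this
  have hXpk : X pk = 1 := by
    rw [hX]
    simp [Cyc, hYpk]
  have hsuppX : ∀ ℓ, X ℓ ≠ 0 → ℓ = pk ∨ ℓ ∣ m := by
    intro ℓ h
    rcases eq_or_ne ℓ pk with h' | h'
    · exact Or.inl h'
    · right
      have hc : (Cyc pk) ℓ = 0 := by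
        simp [Cyc, Finsupp.single_apply, Ne.symm h']
      have hy : Y ℓ ≠ 0 := by
        rw [hX, Finsupp.add_apply, hc, zero_add] at h
        exact h
      have := hdvd ℓ (Finsupp.mem_support_iff.mpr hy)
      rwa [hndiv] at this
  -- key claim
  have key : ∀ A B : ℕ →₀ ℕ, Pos A → Pos B → cmul A B = X →
      pk ∈ A.support → pk ∉ B.support → B = Cyc 1 := by
    intro A B hApos hBpos hAB hA hB
    have h1 : cmul A B pk = 1 := by rw [hAB, hXpk]
    have hBsupp : B.support = {1} := by
      have hsub : B.support ⊆ {1} := by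
        intro b hb
        have hbpos := hBpos b hb
        have hApk : A pk ≠ 0 := Finsupp.mem_support_iff.mp hA
        have hBb : B b ≠ 0 := Finsupp.mem_support_iff.mp hb
        have hle := cmul_le A B pk b hA hb
        have hpos : 0 < A pk * B b * Nat.gcd pk b :=
          Nat.mul_pos (Nat.mul_pos (Nat.pos_of_ne_zero hApk) (Nat.pos_of_ne_zero hBb))
            (Nat.gcd_pos_of_pos_left b hprime.pos)
        have hmem : X (Nat.lcm pk b) ≠ 0 := by
          rw [← hAB]
          omega
        rcases hsuppX _ hmem with h | h
        · have hbdvd : b ∣ pk := h ▸ Nat.dvd_lcm_right pk b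
          rcases (Nat.Prime.eq_one_or_self_of_dvd hprime b hbdvd) with h1' | h1'
          · simpa using h1'
          · exact absurd (h1' ▸ hb) hB
        · exact absurd ((Nat.dvd_lcm_left pk b).trans h) hpkm
      have hne : B.support.Nonempty := by
        obtain ⟨a, _, b, hbmem, _⟩ := cmul_exists A B pk (by rw [h1]; exact one_ne_zero)
        exact ⟨b, hbmem⟩
      obtain ⟨b0, hb0⟩ := hne
      have : b0 = 1 := Finset.mem_singleton.mp (hsub hb0)
      exact Finset.Subset.antisymm hsub
        (Finset.singleton_subset_iff.mpr (this ▸ hb0))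
    have hB1 : B 1 = 1 := by
      rw [cmul_apply, hBsupp] at h1
      simp only [Finset.sum_singleton, Nat.lcm_one_right, Nat.gcd_one_right, mul_one] at h1
      rw [Finset.sum_ite_eq' A.support pk (fun a => A a * B 1), if_pos hA] at h1
      exact Nat.eq_one_of_mul_eq_one_left h1
    ext ℓ
    rcases eq_or_ne ℓ 1 with h | h
    · subst h
      simp [Cyc, hB1]
    · have : B ℓ = 0 := by
        by_contra hc
        exact h (Finset.mem_singleton.mp (hBsupp ▸ Finsupp.mem_support_iff.mpr hc))
      rw [this, Cyc, Finsupp.single_apply, if_neg (Ne.symm h)]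
  constructor
  · -- irreducibility
    intro A B hApos hBpos hAB
    obtain ⟨a, ha, b, hb, hlcm, hne⟩ := cmul_exists A B pk (by rw [hAB, hXpk]; exact one_ne_zero)
    by_cases hA : pk ∈ A.support
    · by_cases hB : pk ∈ B.support
      · exfalso
        have hle := cmul_le A B pk pk hA hB
        rw [Nat.lcm_self, Nat.gcd_self, hAB, hXpk] at hle
        have h2 : 1 ≤ A pk := Nat.pos_of_ne_zero (Finsupp.mem_support_iff.mp hA)
        have h3 : 1 ≤ B pk := Nat.pos_of_ne_zero (Finsupp.mem_support_iff.mp hB)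
        have h4 : 2 ≤ pk := hprime.two_le
        have := Nat.mul_le_mul (Nat.mul_le_mul h2 h3) h4
        omega
      · exact Or.inr (key A B hApos hBpos hAB hA hB)
    · left
      have hbpk : b = pk := by
        have hadvd : a ∣ pk := hlcm ▸ Nat.dvd_lcm_left a b
        rcases hprime.eq_one_or_self_of_dvd a hadvd with h1' | h1'
        · rw [h1'] at hlcm
          simpa using hlcm
        · exact absurd (h1' ▸ ha) hA
      exact key B A hBpos hApos (by rw [← cmul_comm]; exact hAB) (hbpk ▸ hb) hA
  · -- product with C_n
    have hpklen : pk ≤ n := by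
      rw [hnm]
      exact Nat.le_mul_of_pos_left pk hmpos
    have hsizeX : size X = n := by
      have hadd : size X = size (Cyc pk) + size Y := by
        rw [hX]
        unfold size
        apply Finsupp.sum_add_index' <;> intros <;> simp [Nat.mul_add]
      have hcyc : size (Cyc pk) = pk := by
        unfold size Cyc
        rw [Finsupp.sum_single_index] <;> simp
      rw [hadd, hcyc, hsize]
      omega
    have hXdvd : ∀ x ∈ X.support, x ∣ n := by
      intro x hx
      rcases hsuppX x (Finsupp.mem_support_iff.mp hx) with h | h
      · exact h ▸ ⟨m, by rw [hnm, mul_comm]⟩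
      · exact h.trans ⟨pk, hnm⟩
    unfold cmul Cyc
    rw [Finsupp.sum_single_index (by simp)]
    rw [Finsupp.sum]
    calc (∑ x ∈ X.support, (1 * X x * Nat.gcd n x) • Finsupp.single (Nat.lcm n x) (1:ℕ))
        = ∑ x ∈ X.support, (x * X x) • Finsupp.single n (1:ℕ) := by
          refine Finset.sum_congr rfl fun x hx => ?_
          have hd := hXdvd x hx
          have hg : Nat.gcd n x = x := Nat.gcd_eq_right hd
          have hl : Nat.lcm n x = n :=
            Nat.dvd_antisymm (Nat.lcm_dvd dvd_rfl hd) (Nat.dvd_lcm_left n x)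
          rw [hg, hl, one_mul, mul_comm]
      _ = (∑ x ∈ X.support, x * X x) • Finsupp.single n (1:ℕ) := (Finset.sum_smul).symm
      _ = n • Finsupp.single n (1:ℕ) := by
          have : (∑ x ∈ X.support, x * X x) = n := by
            rw [← hsizeX]
            rfl
          rw [this]
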